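/- Let a < b, N ≥ 1, T ≥ 1. For each 1 ≤ t ≤ T let F_{1,t}, …, F_{N,t} be distribution functions on [a,b] (the experts' forecasts) and y_t ∈ [a,b] (the outcomes). Define weights by w_{i,1} = 1/N and w_{i,t+1} = w_{i,t} · exp(−(2/(b−a))·CRPS(F_{i,t}, y_t)), normalized weights w*_{i,t} = w_{i,t}/Σ_{j=1}^N w_{j,t}, and the learner's forecast F_t(u) = 1/2 − (1/4)·ln( (Σ_{i=1}^N w*_{i,t} e^{−2 F_{i,t}(u)²}) / (Σ_{i=1}^N w*_{i,t} e^{−2 (1 − F_{i,t}(u))²}) ) for u ∈ [a,b]. Then for every i with 1 ≤ i ≤ N and every T: Σ_{t=1}^T CRPS(F_t, y_t) ≤ Σ_{t=1}^T CRPS(F_{i,t}, y_t) + ((b−a)/2)·ln N. -/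

import Mathlib

/-!
For outcomes `ω ∈ {0, 1}` the square loss `(p - ω) ^ 2` is `2`-mixable: the substitution
`γ = 1/2 - (1/4) ln (∑ vᵢ e^{-2pᵢ²} / ∑ vᵢ e^{-2(1-pᵢ)²})` satisfies
`(γ - ω) ^ 2 ≤ -(1/2) ln ∑ vᵢ e^{-2(pᵢ-ω)²}`, which is Jensen's inequality for the convex function
`t ↦ exp ((ln t) ^ 2 / 8)`. The CRPS integrates this loss over `u ∈ [a, b]` with `ω = H(u - y)`;
integrating the pointwise bound and using Jensen's inequality once more, in the form
`ln ∑ vᵢ exp (⨍ fᵢ) ≤ ⨍ ln ∑ vᵢ exp fᵢ`, shows that the CRPS is `2/(b-a)`-mixable with the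
learner's forecast as substitution. Summing the per-round bounds telescopes to
`-((b-a)/2) ln ∑ᵢ w_{i,T+1}`, and `∑ᵢ w_{i,T+1} ≥ w_{i,T+1} = e^{-(2/(b-a)) L_{i,T}} / N`.
-/

/-- A distribution function on `[a,b]`: nondecreasing on `[a,b]` with `F a = 0`, `F b = 1`. -/
def DistFunc (a b : ℝ) (F : ℝ → ℝ) : Prop :=
  MonotoneOn F (Set.Icc a b) ∧ F a = 0 ∧ F b = 1

/-- The continuous ranked probability score
`CRPS(F, y) = ∫_a^b (F u - H(u - y))^2 du`, where `H` is the Heaviside function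
(`H(u - y) = 1` iff `u ≥ y`). -/
noncomputable def CRPS (a b : ℝ) (F : ℝ → ℝ) (y : ℝ) : ℝ :=
  ∫ u in a..b, (F u - (if y ≤ u then (1 : ℝ) else 0)) ^ 2

open Real Set MeasureTheory Finset

section SquareLoss

variable {ι : Type*} [Fintype ι]

lemma sum_mul_pos_of_sum_eq_one {v f : ι → ℝ} (hv : ∀ i, 0 ≤ v i) (hv1 : ∑ i, v i = 1)
    (hf : ∀ i, 0 < f i) : 0 < ∑ i, v i * f i := by
  obtain ⟨j, -, hj⟩ := exists_ne_zero_of_sum_ne_zero (hv1 ▸ one_ne_zero : ∑ i, v i ≠ 0)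
  exact sum_pos' (fun i _ => mul_nonneg (hv i) (hf i).le)
    ⟨j, mem_univ j, mul_pos ((hv j).lt_of_ne' hj) (hf j)⟩

lemma convexOn_exp_log_sq_div_eight : ConvexOn ℝ (Ioi 0) fun t => exp (log t ^ 2 / 8) := by
  have hf' : ∀ t ∈ Ioi (0 : ℝ),
      HasDerivAt (fun t => exp (log t ^ 2 / 8)) (exp (log t ^ 2 / 8) * (log t / (4 * t))) t := by
    intro t ht
    have h : HasDerivAt (fun t => log t ^ 2 / 8) (log t / (4 * t)) t := by
      refine (((hasDerivAt_log (ne_of_gt ht)).pow 2).div_const 8).congr_deriv ?_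
      field_simp
      ring
    exact h.exp
  have hf'' : ∀ t ∈ Ioi (0 : ℝ), HasDerivAt (fun t => exp (log t ^ 2 / 8) * (log t / (4 * t)))
      (exp (log t ^ 2 / 8) * (log t - 2) ^ 2 / (16 * t ^ 2)) t := by
    intro t ht
    have ht0 : t ≠ 0 := ne_of_gt ht
    have h : HasDerivAt (fun t => log t / (4 * t)) ((1 - log t) / (4 * t ^ 2)) t := by
      refine ((hasDerivAt_log ht0).div ((hasDerivAt_id t).const_mul 4)
        (by simpa using ht0)).congr_deriv ?_
      simp only [id]
      field_simp
    refine ((hf' t ht).mul h).congr_deriv ?_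
    field_simp
    ring
  rw [← interior_Ioi] at hf' hf''
  refine convexOn_of_hasDerivWithinAt2_nonneg (convex_Ioi 0) ?_
    (fun t ht => (hf' t ht).hasDerivWithinAt) (fun t ht => (hf'' t ht).hasDerivWithinAt)
    (fun t _ => by positivity)
  rw [interior_Ioi] at hf'
  exact fun t ht => (hf' t ht).continuousAt.continuousWithinAt

lemma log_sum_mul_exp_sq_le {q x : ι → ℝ} (hq : ∀ i, 0 ≤ q i) (hq1 : ∑ i, q i = 1) :
    log (∑ i, q i * exp (x i)) ^ 2 ≤ 8 * log (∑ i, q i * exp (x i ^ 2 / 8)) := by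
  have hjensen := convexOn_exp_log_sq_div_eight.map_sum_le (t := univ) (p := fun i => exp (x i))
    (fun i _ => hq i) hq1 (fun i _ => exp_pos (x i))
  simp only [smul_eq_mul, log_exp] at hjensen
  have := (le_log_iff_exp_le (sum_mul_pos_of_sum_eq_one hq hq1 fun i => exp_pos _)).mpr hjensen
  linarith

/-- The Aggregating Algorithm's substitution function for the square loss `(p - ω) ^ 2`,
`ω ∈ {0, 1}`, at learning rate `2`. -/
noncomputable def squareLossSubst (v p : ι → ℝ) : ℝ :=
  1 / 2 - 1 / 4 * log ((∑ i, v i * exp (-2 * p i ^ 2)) / ∑ i, v i * exp (-2 * (1 - p i) ^ 2))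

lemma squareLossSubst_one_sub (v p : ι → ℝ) :
    squareLossSubst v (fun i => 1 - p i) = 1 - squareLossSubst v p := by
  simp only [squareLossSubst, sub_sub_cancel, ← inv_div (∑ i, v i * exp (-2 * p i ^ 2)), log_inv]
  ring

lemma squareLossSubst_sq_le {v : ι → ℝ} (hv : ∀ i, 0 ≤ v i) (hv1 : ∑ i, v i = 1) (p : ι → ℝ) :
    squareLossSubst v p ^ 2 ≤ -(1 / 2) * log (∑ i, v i * exp (-2 * p i ^ 2)) := by
  set A := ∑ i, v i * exp (-2 * p i ^ 2)
  set B := ∑ i, v i * exp (-2 * (1 - p i) ^ 2)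
  have hA : 0 < A := sum_mul_pos_of_sum_eq_one hv hv1 fun i => exp_pos _
  have hB : 0 < B := sum_mul_pos_of_sum_eq_one hv hv1 fun i => exp_pos _
  -- Jensen for the weights `vᵢ e^{-2pᵢ²} / A` at the points `4 pᵢ`.
  have hjensen := log_sum_mul_exp_sq_le (x := fun i => 4 * p i)
    (q := fun i => v i * exp (-2 * p i ^ 2) / A)
    (fun i => div_nonneg (mul_nonneg (hv i) (exp_pos _).le) hA.le)
    (by rw [← sum_div, div_self hA.ne'])
  have hexp_mean : ∑ i, v i * exp (-2 * p i ^ 2) / A * exp (4 * p i) = exp 2 * B / A := by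
    simp only [B, mul_sum, sum_div]
    refine sum_congr rfl fun i _ => ?_
    rw [div_mul_eq_mul_div, mul_assoc, ← exp_add, mul_left_comm, ← exp_add]
    ring_nf
  have hexp_sq_mean : ∑ i, v i * exp (-2 * p i ^ 2) / A * exp ((4 * p i) ^ 2 / 8) = A⁻¹ := by
    simp only [div_mul_eq_mul_div, mul_assoc, ← exp_add]
    simp only [show ∀ q : ℝ, -2 * q ^ 2 + (4 * q) ^ 2 / 8 = 0 from fun q => by ring, exp_zero,
      mul_one, ← sum_div, hv1, one_div]
  rw [hexp_mean, hexp_sq_mean, log_inv, log_div (by positivity) hA.ne', log_mul (exp_pos 2).ne' hB.ne',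
    log_exp] at hjensen
  have hsubst : squareLossSubst v p = (2 + log B - log A) / 4 := by
    rw [squareLossSubst, log_div hA.ne' hB.ne']
    ring
  rw [hsubst]
  nlinarith

lemma squareLossSubst_sub_sq_le {v : ι → ℝ} (hv : ∀ i, 0 ≤ v i) (hv1 : ∑ i, v i = 1)
    (p : ι → ℝ) {ω : ℝ} (hω : ω = 0 ∨ ω = 1) :
    (squareLossSubst v p - ω) ^ 2 ≤ -(1 / 2) * log (∑ i, v i * exp (-2 * (p i - ω) ^ 2)) := by
  rcases hω with rfl | rfl
  · simpa only [sub_zero] using squareLossSubst_sq_le hv hv1 p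
  · have h := squareLossSubst_sq_le hv hv1 (fun i => 1 - p i)
    rw [squareLossSubst_one_sub] at h
    convert h using 1
    · ring
    · simp only [← neg_sub _ (1 : ℝ), neg_sq]

end SquareLoss

section LogSumExp

variable {ι α : Type*} [Fintype ι] [MeasurableSpace α]

lemma abs_log_sum_mul_exp_le {v x : ι → ℝ} (hv : ∀ i, 0 ≤ v i) (hv1 : ∑ i, v i = 1) {C : ℝ}
    (hx : ∀ i, |x i| ≤ C) : |log (∑ i, v i * exp (x i))| ≤ C := by
  have hlow : exp (-C) ≤ ∑ i, v i * exp (x i) :=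
    calc exp (-C) = ∑ i, v i * exp (-C) := by rw [← sum_mul, hv1, one_mul]
      _ ≤ _ := sum_le_sum fun i _ =>
        mul_le_mul_of_nonneg_left (exp_le_exp.mpr (neg_le_of_abs_le (hx i))) (hv i)
  have hup : ∑ i, v i * exp (x i) ≤ exp C :=
    calc _ ≤ ∑ i, v i * exp C := sum_le_sum fun i _ =>
          mul_le_mul_of_nonneg_left (exp_le_exp.mpr (le_of_abs_le (hx i))) (hv i)
      _ = exp C := by rw [← sum_mul, hv1, one_mul]
  have hpos := (exp_pos (-C)).trans_le hlow
  exact abs_le.mpr ⟨(le_log_iff_exp_le hpos).mpr hlow, (log_le_iff_le_exp hpos).mpr hup⟩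

variable {μ : Measure α} {v : ι → ℝ} {f : ι → α → ℝ} {C : ℝ}

lemma integrable_log_sum_mul_exp [IsFiniteMeasure μ] (hv : ∀ i, 0 ≤ v i) (hv1 : ∑ i, v i = 1)
    (hfm : ∀ i, AEMeasurable (f i) μ) (hfC : ∀ i, ∀ᵐ x ∂μ, |f i x| ≤ C) :
    Integrable (fun x => log (∑ i, v i * exp (f i x))) μ := by
  refine Integrable.of_bound (by fun_prop : AEMeasurable _ μ).aestronglyMeasurable C ?_
  filter_upwards [ae_all_iff.mpr hfC] with x hx using abs_log_sum_mul_exp_le hv hv1 hx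

theorem log_sum_mul_exp_integral_le [IsProbabilityMeasure μ] (hv : ∀ i, 0 ≤ v i)
    (hv1 : ∑ i, v i = 1) (hfm : ∀ i, AEMeasurable (f i) μ) (hfC : ∀ i, ∀ᵐ x ∂μ, |f i x| ≤ C) :
    log (∑ i, v i * exp (∫ x, f i x ∂μ)) ≤ ∫ x, log (∑ i, v i * exp (f i x)) ∂μ := by
  set L := fun x => log (∑ i, v i * exp (f i x))
  have hL : Integrable L μ := integrable_log_sum_mul_exp hv hv1 hfm hfC
  have hf : ∀ i, Integrable (f i) μ := fun i =>
    .of_bound (hfm i).aestronglyMeasurable C (by simpa only [norm_eq_abs] using hfC i)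
  have hnormalized : ∀ x, ∑ i, v i * exp (f i x - L x) = 1 := fun x => by
    simp only [exp_sub, L, exp_log (sum_mul_pos_of_sum_eq_one hv hv1 fun i => exp_pos _),
      mul_div_assoc', ← sum_div]
    exact div_self (sum_mul_pos_of_sum_eq_one hv hv1 fun i => exp_pos _).ne'
  have hexp : ∀ i, Integrable (fun x => exp (f i x - L x)) μ := fun i => by
    refine .of_bound (by fun_prop) (exp (2 * C)) ?_
    filter_upwards [ae_all_iff.mpr hfC] with x hx
    rw [norm_eq_abs, abs_of_pos (exp_pos _), exp_le_exp]
    linarith [le_of_abs_le (hx i), neg_le_of_abs_le (abs_log_sum_mul_exp_le hv hv1 hx)]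
  -- Jensen for `exp` at `fᵢ - L`, whose weighted exponentials sum to `1` pointwise.
  have hjensen : ∀ i, exp (∫ x, f i x - L x ∂μ) ≤ ∫ x, exp (f i x - L x) ∂μ := fun i =>
    convexOn_exp.map_integral_le continuous_exp.continuousOn isClosed_univ
      (.of_forall fun _ => mem_univ _) ((hf i).sub hL) (hexp i)
  have hpos : 0 < ∑ i, v i * exp (∫ x, f i x ∂μ) :=
    sum_mul_pos_of_sum_eq_one hv hv1 fun i => exp_pos _
  refine (log_le_iff_le_exp hpos).mpr ?_
  calc ∑ i, v i * exp (∫ x, f i x ∂μ)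
      = exp (∫ x, L x ∂μ) * ∑ i, v i * exp (∫ x, f i x - L x ∂μ) := by
        simp only [integral_sub (hf _) hL, exp_sub, mul_sum]
        refine sum_congr rfl fun i _ => ?_
        field_simp
    _ ≤ exp (∫ x, L x ∂μ) * ∑ i, v i * ∫ x, exp (f i x - L x) ∂μ := by
        gcongr with i
        · exact hv i
        · exact hjensen i
    _ = exp (∫ x, L x ∂μ) := by
        simp only [← integral_const_mul]
        rw [← integral_finsetSum _ fun i _ => (hexp i).const_mul (v i)]
        simp only [hnormalized, integral_const, probReal_univ, one_smul, mul_one]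

end LogSumExp

section CRPS

variable {a b : ℝ}

lemma DistFunc.mem_Icc {F : ℝ → ℝ} (hF : DistFunc a b F) {u : ℝ} (hu : u ∈ Icc a b) :
    F u ∈ Set.Icc 0 1 := by
  have hab : a ≤ b := hu.1.trans hu.2
  exact ⟨by simpa only [hF.2.1] using hF.1 (left_mem_Icc.mpr hab) hu hu.1,
    by simpa only [hF.2.2] using hF.1 hu (right_mem_Icc.mpr hab) hu.2⟩

lemma abs_neg_two_mul_sq_sub_ite_le {p : ℝ} (hp : p ∈ Set.Icc 0 1) (y u : ℝ) :
    |-2 * (p - if y ≤ u then 1 else 0) ^ 2| ≤ 2 := by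
  rw [abs_le]
  split_ifs <;> constructor <;> nlinarith [hp.1, hp.2]

theorem CRPS_le_neg_mul_log_sum_mul_exp {ι : Type*} [Fintype ι] (hab : a < b)
    {F : ι → ℝ → ℝ} (hF : ∀ i, DistFunc a b (F i)) (y : ℝ) {v : ι → ℝ} (hv : ∀ i, 0 ≤ v i)
    (hv1 : ∑ i, v i = 1) {g : ℝ → ℝ} (hg : ∀ u ∈ Icc a b, g u = squareLossSubst v fun i => F i u) :
    CRPS a b g y ≤ -((b - a) / 2) * log (∑ i, v i * exp (-(2 / (b - a)) * CRPS a b (F i) y)) := by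
  set ω : ℝ → ℝ := fun u => if y ≤ u then 1 else 0
  set ν := volume.restrict (Ioc a b)
  have hν : ν.real univ = b - a := by
    rw [measureReal_restrict_apply_univ, volume_real_Ioc_of_le hab.le]
  have : NeZero ν := ⟨fun h => by simp only [h, measureReal_zero_apply] at hν; linarith⟩
  have hint_eq : ∀ h : ℝ → ℝ, ∫ u, h u ∂ν = (b - a) * ⨍ u, h u ∂ν := fun h => by
    rw [← hν, ← smul_eq_mul, measure_smul_average]
  set f : ι → ℝ → ℝ := fun i u => -2 * (F i u - ω u) ^ 2
  set L : ℝ → ℝ := fun u => log (∑ i, v i * exp (f i u))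
  have hfm : ∀ i, AEMeasurable (f i) ν := fun i => by
    show AEMeasurable (fun u => -2 * (F i u - ω u) ^ 2) ν
    have := aemeasurable_restrict_of_monotoneOn (μ := volume) measurableSet_Ioc
      ((hF i).1.mono Ioc_subset_Icc_self)
    have : Measurable ω := Measurable.ite measurableSet_Ici measurable_const measurable_const
    fun_prop
  have hfC : ∀ i, ∀ᵐ u ∂ν, |f i u| ≤ 2 := fun i => by
    filter_upwards [ae_restrict_mem measurableSet_Ioc] with u hu
    exact abs_neg_two_mul_sq_sub_ite_le ((hF i).mem_Icc (Ioc_subset_Icc_self hu)) y u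
  -- `⨍ ∂ν` is by definition the integral against the probability measure `(ν univ)⁻¹ • ν`.
  have hmix : log (∑ i, v i * exp (⨍ u, f i u ∂ν)) ≤ ⨍ u, L u ∂ν :=
    log_sum_mul_exp_integral_le hv hv1 (fun i => (hfm i).smul_measure _)
      (fun i => Measure.ae_smul_measure (hfC i) _)
  have hexpert : ∀ i, -(2 / (b - a)) * CRPS a b (F i) y = ⨍ u, f i u ∂ν := fun i => by
    have h := hint_eq (f i)
    rw [integral_const_mul, ← intervalIntegral.integral_of_le hab.le, ← CRPS] at h
    rw [show -(2 / (b - a)) * CRPS a b (F i) y = (b - a)⁻¹ * (-2 * CRPS a b (F i) y) by ring, h,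
      inv_mul_cancel_left₀ (sub_pos.mpr hab).ne']
  have hpointwise : ∀ᵐ u ∂ν, (g u - ω u) ^ 2 ≤ -(1 / 2) * L u := by
    filter_upwards [ae_restrict_mem measurableSet_Ioc] with u hu
    rw [hg u (Ioc_subset_Icc_self hu)]
    exact squareLossSubst_sub_sq_le hv hv1 _ (by simp only [ω]; split_ifs <;> simp)
  calc CRPS a b g y = ∫ u, (g u - ω u) ^ 2 ∂ν := intervalIntegral.integral_of_le hab.le
    _ ≤ ∫ u, -(1 / 2) * L u ∂ν := integral_mono_of_nonneg (.of_forall fun u => sq_nonneg _)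
        ((integrable_log_sum_mul_exp hv hv1 hfm hfC).const_mul _) hpointwise
    _ = -((b - a) / 2) * ⨍ u, L u ∂ν := by rw [integral_const_mul, hint_eq]; ring
    _ ≤ _ := by
        simp only [hexpert]
        exact mul_le_mul_of_nonpos_left hmix (by linarith)

end CRPS

section AggregatingAlgorithm

variable {N : ℕ} {η : ℝ} {ℓ w : Fin N → ℕ → ℝ}

lemma aa_weight_pos (hw1 : ∀ i, w i 1 = 1 / N)
    (hwrec : ∀ i, ∀ t, 1 ≤ t → w i (t + 1) = w i t * exp (-η * ℓ i t))
    (i : Fin N) {t : ℕ} (ht : 1 ≤ t) : 0 < w i t := by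
  induction t, ht using Nat.le_induction with
  | base => rw [hw1]; have := i.pos; positivity
  | succ t ht ih => rw [hwrec i t ht]; exact mul_pos ih (exp_pos _)

lemma aa_weight_eq (hw1 : ∀ i, w i 1 = 1 / N)
    (hwrec : ∀ i, ∀ t, 1 ≤ t → w i (t + 1) = w i t * exp (-η * ℓ i t)) (i : Fin N) (T : ℕ) :
    w i (T + 1) = exp (-η * ∑ t ∈ Icc 1 T, ℓ i t) / N := by
  induction T with
  | zero => simp [hw1]
  | succ T ih =>
    rw [hwrec i (T + 1) (by omega), ih, sum_Icc_succ_top (by omega), mul_add, exp_add]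
    ring

theorem aa_regret_le (hη : 0 < η) (hw1 : ∀ i, w i 1 = 1 / N)
    (hwrec : ∀ i, ∀ t, 1 ≤ t → w i (t + 1) = w i t * exp (-η * ℓ i t)) {loss : ℕ → ℝ}
    (hloss : ∀ t, 1 ≤ t →
      loss t ≤ -(1 / η) * log (∑ i, (w i t / ∑ j, w j t) * exp (-η * ℓ i t)))
    (i : Fin N) (T : ℕ) :
    ∑ t ∈ Icc 1 T, loss t ≤ ∑ t ∈ Icc 1 T, ℓ i t + 1 / η * log N := by
  set W : ℕ → ℝ := fun t => ∑ j, w j t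
  have hW : ∀ t, 1 ≤ t → 0 < W t := fun t ht =>
    sum_pos (fun j _ => aa_weight_pos hw1 hwrec j ht) ⟨i, mem_univ i⟩
  have hstep : ∀ t, 1 ≤ t → loss t ≤ -(1 / η) * (log (W (t + 1)) - log (W t)) := fun t ht => by
    have hratio : ∑ j, (w j t / ∑ k, w k t) * exp (-η * ℓ j t) = W (t + 1) / W t := by
      simp only [W, sum_div]
      exact sum_congr rfl fun j _ => by rw [hwrec j t ht, div_mul_eq_mul_div]
    have h := hloss t ht
    rwa [hratio, log_div (hW _ (by omega)).ne' (hW t ht).ne'] at h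
  have hW1 : W 1 = 1 := by
    simp only [W, hw1, sum_const, card_univ, Fintype.card_fin, nsmul_eq_mul]
    field_simp [(Nat.cast_pos.mpr i.pos).ne']
  have htelescope : ∀ T, ∑ t ∈ Icc 1 T, loss t ≤ -(1 / η) * log (W (T + 1)) := by
    intro T
    induction T with
    | zero => simp [hW1]
    | succ T ih =>
      rw [sum_Icc_succ_top (by omega)]
      linarith [hstep (T + 1) (by omega)]
  have hexpert : log (w i (T + 1)) ≤ log (W (T + 1)) :=
    log_le_log (aa_weight_pos hw1 hwrec i (by omega))
      (single_le_sum (fun j _ => (aa_weight_pos hw1 hwrec j (by omega)).le) (mem_univ i))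
  rw [aa_weight_eq hw1 hwrec, log_div (exp_pos _).ne' (Nat.cast_pos.mpr i.pos).ne', log_exp]
    at hexpert
  calc ∑ t ∈ Icc 1 T, loss t ≤ -(1 / η) * log (W (T + 1)) := htelescope T
    _ ≤ -(1 / η) * (-η * ∑ t ∈ Icc 1 T, ℓ i t - log N) :=
        mul_le_mul_of_nonpos_left hexpert (by simpa using hη.le)
    _ = ∑ t ∈ Icc 1 T, ℓ i t + 1 / η * log N := by field_simp; ring

end AggregatingAlgorithm

theorem aa_crps_regret_bound_general (a b : ℝ) (hab : a < b) (N T : ℕ)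
    (Fe : Fin N → ℕ → ℝ → ℝ) (hFe : ∀ i t, DistFunc a b (Fe i t))
    (y : ℕ → ℝ)
    (w : Fin N → ℕ → ℝ)
    (hw1 : ∀ i, w i 1 = 1 / N)
    (hwrec : ∀ i, ∀ t, 1 ≤ t →
      w i (t + 1) = w i t * Real.exp (-(2 / (b - a)) * CRPS a b (Fe i t) (y t)))
    (G : ℕ → ℝ → ℝ)
    (hG : ∀ t, ∀ u ∈ Set.Icc a b, G t u = 1 / 2 - (1 / 4) * Real.log
      ((∑ i, (w i t / ∑ j, w j t) * Real.exp (-2 * (Fe i t u) ^ 2)) /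
        (∑ i, (w i t / ∑ j, w j t) * Real.exp (-2 * (1 - Fe i t u) ^ 2)))) :
    ∀ i, ∑ t ∈ Finset.Icc 1 T, CRPS a b (G t) (y t) ≤
      (∑ t ∈ Finset.Icc 1 T, CRPS a b (Fe i t) (y t)) + ((b - a) / 2) * Real.log N := by
  intro i
  have hη : 0 < 2 / (b - a) := div_pos two_pos (sub_pos.mpr hab)
  have hround : ∀ t, 1 ≤ t → CRPS a b (G t) (y t) ≤ -(1 / (2 / (b - a))) *
      log (∑ j, (w j t / ∑ k, w k t) * exp (-(2 / (b - a)) * CRPS a b (Fe j t) (y t))) := by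
    intro t ht
    have hW : 0 < ∑ k, w k t := sum_pos (fun k _ => aa_weight_pos hw1 hwrec k ht) ⟨i, mem_univ i⟩
    rw [one_div_div]
    exact CRPS_le_neg_mul_log_sum_mul_exp hab (fun j => hFe j t) (y t)
      (fun j => div_nonneg (aa_weight_pos hw1 hwrec j ht).le hW.le)
      (by rw [← sum_div, div_self hW.ne']) (hG t)
  simpa only [one_div_div] using aa_regret_le hη hw1 hwrec hround i T

/-- Theorem 2: the Aggregating Algorithm (Protocol 3) for the CRPS loss has the
time-independent regret bound `((b-a)/2)·ln N` against every expert. -/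
theorem aa_crps_regret_bound (a b : ℝ) (hab : a < b) (N T : ℕ) (hN : 1 ≤ N) (hT : 1 ≤ T)
    (Fe : Fin N → ℕ → ℝ → ℝ) (hFe : ∀ i t, DistFunc a b (Fe i t))
    (y : ℕ → ℝ) (hy : ∀ t, y t ∈ Set.Icc a b)
    (w : Fin N → ℕ → ℝ)
    (hw1 : ∀ i, w i 1 = 1 / N)
    (hwrec : ∀ i, ∀ t, 1 ≤ t →
      w i (t + 1) = w i t * Real.exp (-(2 / (b - a)) * CRPS a b (Fe i t) (y t)))
    (G : ℕ → ℝ → ℝ)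
    (hG : ∀ t, ∀ u ∈ Set.Icc a b, G t u = 1 / 2 - (1 / 4) * Real.log
      ((∑ i, (w i t / ∑ j, w j t) * Real.exp (-2 * (Fe i t u) ^ 2)) /
        (∑ i, (w i t / ∑ j, w j t) * Real.exp (-2 * (1 - Fe i t u) ^ 2)))) :
    ∀ i, ∑ t ∈ Finset.Icc 1 T, CRPS a b (G t) (y t) ≤
      (∑ t ∈ Finset.Icc 1 T, CRPS a b (Fe i t) (y t)) + ((b - a) / 2) * Real.log N :=
  aa_crps_regret_bound_general a b hab N T Fe hFe y w hw1 hwrec G hG
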